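/- Let N ≥ 1, let G be a closed subgroup of U_N with Haar probability measure μ, let I ⊆ {1,…,N} be nonempty, let k ≥ 1, and let e = (e_1,…,e_k) be a word with letters in {∘,•}. For multi-indices i, j ∈ {1,…,N}^k, set P_{i,j} = ∫_G ∏_{a=1}^k g_{i_a j_a}^{e_a} dμ(g) and P^I_i = |I|^{-k/2} Σ_{j∈I^k} P_{i,j}. Then for every point x in the orbit G·ξ_I = {h ξ_I : h ∈ G} and every i ∈ {1,…,N}^k one has Σ_{j∈{1,…,N}^k} P_{i,j} ∏_{a=1}^k x_{j_a}^{e_a} = P^I_i, where for a scalar x, x^∘ = x and x^• = conj(x). -/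

import Mathlib

open Matrix MeasureTheory

/-- `x^∘ = x` and `x^• = conj x`, for a scalar `x` (here `true` encodes `•`). -/
noncomputable def dec (b : Bool) (z : ℂ) : ℂ := if b then (starRingEnd ℂ) z else z

/-- The unit vector `ξ_I ∈ ℂ^N`, with coordinates `1/√|I|` on `I` and `0` elsewhere. -/
noncomputable def xiI (N : ℕ) (I : Finset (Fin N)) : Fin N → ℂ :=
  fun i => if i ∈ I then ((1 / Real.sqrt I.card : ℝ) : ℂ) else 0

/-- We equip a closed subgroup `G ⊆ U_N` with its Borel σ-algebra. -/
noncomputable instance instMeasSubgroupUG {N : ℕ} (G : Subgroup (Matrix.unitaryGroup (Fin N) ℂ)) :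
    MeasurableSpace G := borel G

instance instBorelSubgroupUG {N : ℕ} (G : Subgroup (Matrix.unitaryGroup (Fin N) ℂ)) :
    BorelSpace G := ⟨rfl⟩

/-!
Expanding each coordinate of `g x` multilinearly gives
`Σ_j P_{i,j} ∏_a x_{j_a}^{e_a} = ∫_G ∏_a (g x)_{i_a}^{e_a} dμ(g)`.
For `x = h ξ_I` with `h ∈ G`, right invariance of `μ` absorbs `h`, so `x` may be replaced by `ξ_I`,
and the same expansion for `ξ_I` produces `|I|^{-k/2} Σ_{j ∈ I^k} P_{i,j}`.
-/

lemma dec_mul (b : Bool) (z w : ℂ) : dec b (z * w) = dec b z * dec b w := by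
  cases b <;> simp [dec]

lemma dec_sum {ι : Type*} (b : Bool) (s : Finset ι) (f : ι → ℂ) :
    dec b (∑ i ∈ s, f i) = ∑ i ∈ s, dec b (f i) := by
  cases b <;> simp [dec]

lemma dec_ofReal (b : Bool) (r : ℝ) : dec b r = r := by
  cases b <;> simp [dec]

lemma norm_dec (b : Bool) (z : ℂ) : ‖dec b z‖ = ‖z‖ := by
  cases b <;> simp [dec]

lemma continuous_dec (b : Bool) : Continuous (dec b) := by
  cases b
  · exact continuous_id
  · exact Complex.continuous_conj

lemma prod_dec_sum {ι κ : Type*} [Fintype ι] [DecidableEq ι] [Fintype κ] (e : ι → Bool)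
    (f : ι → κ → ℂ) :
    ∏ a, dec (e a) (∑ l, f a l) = ∑ j : ι → κ, ∏ a, dec (e a) (f a (j a)) := by
  simp only [dec_sum]
  exact Fintype.prod_sum _

lemma prod_dec_mulVec {m n ι : Type*} [Fintype n] [Fintype ι] [DecidableEq ι] (e : ι → Bool)
    (g : Matrix m n ℂ) (v : n → ℂ) (i : ι → m) :
    ∏ a, dec (e a) ((g *ᵥ v) (i a)) =
      ∑ j : ι → n, (∏ a, dec (e a) (g (i a) (j a))) * ∏ a, dec (e a) (v (j a)) := by
  simp only [mulVec, dotProduct, prod_dec_sum, dec_mul, Finset.prod_mul_distrib]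

lemma mulVec_xiI_apply {m : Type*} {N : ℕ} (g : Matrix m (Fin N) ℂ) (I : Finset (Fin N)) (r : m) :
    (g *ᵥ xiI N I) r = ((1 / √I.card : ℝ) : ℂ) * ∑ l : I, g r l := by
  rw [Finset.sum_coe_sort I (g r), Finset.mul_sum]
  simp only [mulVec, dotProduct, xiI, mul_ite, mul_zero, Finset.sum_ite_mem, Finset.univ_inter,
    mul_comm]

lemma prod_dec_mulVec_xiI {m : Type*} {N k : ℕ} (e : Fin k → Bool) (g : Matrix m (Fin N) ℂ)
    (I : Finset (Fin N)) (i : Fin k → m) :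
    ∏ a, dec (e a) ((g *ᵥ xiI N I) (i a)) =
      ((1 / √((I.card : ℝ) ^ k) : ℝ) : ℂ) * ∑ j : Fin k → I, ∏ a, dec (e a) (g (i a) (j a)) := by
  have hsqrt : 1 / √((I.card : ℝ) ^ k) = (1 / √I.card) ^ k := by
    rw [div_pow, one_pow, ← Real.sqrt_sq (by positivity : 0 ≤ √(I.card : ℝ) ^ k), ← pow_mul,
      mul_comm, pow_mul, Real.sq_sqrt (Nat.cast_nonneg _)]
  simp only [mulVec_xiI_apply, dec_mul, dec_ofReal, Finset.prod_mul_distrib, Finset.prod_const,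
    Finset.card_univ, Fintype.card_fin, prod_dec_sum, hsqrt, Complex.ofReal_pow]

section Moments

variable {N k : ℕ} {G : Subgroup (unitaryGroup (Fin N) ℂ)} (μ : Measure G) (e : Fin k → Bool)
  (i : Fin k → Fin N)

lemma integrable_prod_dec_entry [IsFiniteMeasure μ] (j : Fin k → Fin N) :
    Integrable (fun g : G => ∏ a, dec (e a) ((g : Matrix (Fin N) (Fin N) ℂ) (i a) (j a))) μ := by
  refine .of_bound (Continuous.aestronglyMeasurable ?_) 1 (.of_forall fun g => ?_)
  · exact continuous_finsetProd _ fun a _ => (continuous_dec _).comp <|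
      (continuous_apply _).comp <| (continuous_apply _).comp <|
        (continuous_subtype_val (p := (· ∈ unitaryGroup (Fin N) ℂ))).comp continuous_subtype_val
  rw [norm_prod]
  refine Finset.prod_le_one (fun _ _ => norm_nonneg _) fun a _ => ?_
  rw [norm_dec]
  exact entry_norm_bound_of_unitary (g : unitaryGroup (Fin N) ℂ).2 _ _

lemma integral_prod_dec_mulVec [IsFiniteMeasure μ] (v : Fin N → ℂ) :
    ∫ g : G, ∏ a, dec (e a) (((g : Matrix (Fin N) (Fin N) ℂ) *ᵥ v) (i a)) ∂μ =
      ∑ j : Fin k → Fin N,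
        (∫ g : G, ∏ a, dec (e a) ((g : Matrix (Fin N) (Fin N) ℂ) (i a) (j a)) ∂μ) *
          ∏ a, dec (e a) (v (j a)) := by
  simp only [prod_dec_mulVec, ← integral_mul_const]
  exact integral_finsetSum _ fun j _ => (integrable_prod_dec_entry μ e i j).mul_const _

lemma integral_prod_dec_mulVec_xiI [IsFiniteMeasure μ] (I : Finset (Fin N)) :
    ∫ g : G, ∏ a, dec (e a) (((g : Matrix (Fin N) (Fin N) ℂ) *ᵥ xiI N I) (i a)) ∂μ =
      ((1 / √((I.card : ℝ) ^ k) : ℝ) : ℂ) * ∑ j : Fin k → I,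
        ∫ g : G, ∏ a, dec (e a) ((g : Matrix (Fin N) (Fin N) ℂ) (i a) (j a)) ∂μ := by
  simp only [prod_dec_mulVec_xiI, integral_const_mul]
  exact congrArg _ <| integral_finsetSum _ fun j _ => integrable_prod_dec_entry μ e i _

lemma integral_prod_dec_mulVec_mul_right [μ.IsMulRightInvariant] {h : unitaryGroup (Fin N) ℂ}
    (hh : h ∈ G) (v : Fin N → ℂ) :
    ∫ g : G, ∏ a, dec (e a) (((g : Matrix (Fin N) (Fin N) ℂ) *ᵥ (h *ᵥ v)) (i a)) ∂μ =
      ∫ g : G, ∏ a, dec (e a) (((g : Matrix (Fin N) (Fin N) ℂ) *ᵥ v) (i a)) ∂μ := by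
  simp only [mulVec_mulVec]
  exact integral_mul_right_eq_self
    (fun g : G => ∏ a, dec (e a) (((g : Matrix (Fin N) (Fin N) ℂ) *ᵥ v) (i a))) ⟨h, hh⟩

end Moments

theorem stmt10_general (N : ℕ) (G : Subgroup (Matrix.unitaryGroup (Fin N) ℂ))
    (μ : Measure G) [IsProbabilityMeasure μ]
    [μ.IsMulRightInvariant]
    (I : Finset (Fin N))
    (k : ℕ) (e : Fin k → Bool)
    (P : Matrix (Fin k → Fin N) (Fin k → Fin N) ℂ)
    (hP : ∀ i j : Fin k → Fin N, P i j = ∫ g : G, ∏ a, dec (e a)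
      (((g : Matrix.unitaryGroup (Fin N) ℂ) : Matrix (Fin N) (Fin N) ℂ) (i a) (j a)) ∂μ)
    (PI : (Fin k → Fin N) → ℂ)
    (hPI : ∀ i : Fin k → Fin N, PI i = ((1 / Real.sqrt ((I.card : ℝ) ^ k) : ℝ) : ℂ) *
      ∑ j : Fin k → {y // y ∈ I}, P i (fun a => (j a : Fin N))) :
    ∀ x : Fin N → ℂ, (∃ h ∈ G, ((h : Matrix (Fin N) (Fin N) ℂ)) *ᵥ xiI N I = x) →
      ∀ i : Fin k → Fin N,
        ∑ j : Fin k → Fin N, P i j * ∏ a, dec (e a) (x (j a)) = PI i := by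
  rintro x ⟨h, hh, rfl⟩ i
  simp only [hPI, hP]
  rw [← integral_prod_dec_mulVec, integral_prod_dec_mulVec_mul_right μ e i hh,
    integral_prod_dec_mulVec_xiI]

/-- Classical case of Proposition 1.4: with `P_{i,j} = ∫_G ∏_a g_{i_a j_a}^{e_a} dμ(g)` and
`P^I_i = |I|^{-k/2} Σ_{j∈I^k} P_{i,j}`, every point `x` of the orbit `G·ξ_I` satisfies the moment
relations `Σ_j P_{i,j} ∏_a x_{j_a}^{e_a} = P^I_i`. -/
theorem stmt10 (N : ℕ) (hN : 1 ≤ N) (G : Subgroup (Matrix.unitaryGroup (Fin N) ℂ))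
    (hG : IsClosed (G : Set (Matrix.unitaryGroup (Fin N) ℂ)))
    (μ : Measure G) [IsProbabilityMeasure μ]
    [μ.IsMulLeftInvariant] [μ.IsMulRightInvariant]
    (I : Finset (Fin N)) (hI : I.Nonempty)
    (k : ℕ) (hk : 1 ≤ k) (e : Fin k → Bool)
    (P : Matrix (Fin k → Fin N) (Fin k → Fin N) ℂ)
    (hP : ∀ i j : Fin k → Fin N, P i j = ∫ g : G, ∏ a, dec (e a)
      (((g : Matrix.unitaryGroup (Fin N) ℂ) : Matrix (Fin N) (Fin N) ℂ) (i a) (j a)) ∂μ)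
    (PI : (Fin k → Fin N) → ℂ)
    (hPI : ∀ i : Fin k → Fin N, PI i = ((1 / Real.sqrt ((I.card : ℝ) ^ k) : ℝ) : ℂ) *
      ∑ j : Fin k → {y // y ∈ I}, P i (fun a => (j a : Fin N))) :
    ∀ x : Fin N → ℂ, (∃ h ∈ G, ((h : Matrix (Fin N) (Fin N) ℂ)) *ᵥ xiI N I = x) →
      ∀ i : Fin k → Fin N,
        ∑ j : Fin k → Fin N, P i j * ∏ a, dec (e a) (x (j a)) = PI i :=
  stmt10_general N G μ I k e P hP PI hPI
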